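/- arXiv:2306.15343 — 6 statements merged into one kernel-verified Lean document; each statement's English description precedes it below -/
import Mathlib

section
/- Let f₁, ..., fₙ : 𝔻 → ℂ be holomorphic functions on the open unit disc 𝔻 with Re(fⱼ(z)) ≤ 0 for all z ∈ 𝔻 and all j, and suppose f₁(z) + f₂(z) + ⋯ + fₙ(z) = (z+1)/(z-1) for all z ∈ 𝔻. Then for each j and all z ∈ 𝔻, fⱼ(z) = i·Im(fⱼ(0)) − Re(fⱼ(0))·(z+1)/(z-1). -/
/-!
For a holomorphic `f` on the disc with `Re f ≤ 0`, the Schwarz lemma applied to the Cayley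
transform `(f - f 0) / (f + conj (f 0))` gives `‖f z - f 0‖ ≤ ‖z‖ * ‖f z + conj (f 0)‖`, hence
the Harnack bound `Re f(0) (1 + r) ≤ Re f(r) (1 - r)` for `0 ≤ r < 1`. The function
`(z + 1) / (z - 1)` attains this bound, so when the `f j` sum to it the Harnack bounds of
the `f j` add up to an equality and each of them is an equality. Equality in the Schwarz
estimate determines `f j r` for real `r`, and the identity theorem extends the formula to
the whole disc.
-/

open Complex Metric

open Filter Topology ComplexConjugate

theorem ofReal_mem_ball_zero_one {r : ℝ} (hr₀ : 0 ≤ r) (hr₁ : r < 1) :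
    (r : ℂ) ∈ ball (0 : ℂ) 1 := by
  rwa [mem_ball_zero_iff, norm_real, Real.norm_of_nonneg hr₀]

theorem ofReal_add_one_div_sub_one (r : ℝ) :
    (((r + 1) / (r - 1) : ℝ) : ℂ) = (r + 1) / (r - 1) := by
  push_cast; rfl

theorem differentiableOn_add_one_div_sub_one :
    DifferentiableOn ℂ (fun z : ℂ => (z + 1) / (z - 1)) (ball 0 1) :=
  (differentiableOn_id.add_const 1).div (differentiableOn_id.sub_const 1) fun z hz h => by
    rw [sub_eq_zero.1 h, mem_ball_zero_iff, norm_one] at hz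
    exact lt_irrefl 1 hz

theorem Complex.normSq_add_conj_sub_normSq_sub (w a : ℂ) :
    normSq (w + conj a) - normSq (w - a) = 4 * w.re * a.re := by
  simp only [normSq_apply, add_re, add_im, sub_re, sub_im, conj_re, conj_im]
  ring

theorem norm_sub_le_mul_norm_add_conj_of_re_neg {f : ℂ → ℂ}
    (hd : DifferentiableOn ℂ f (ball 0 1)) (hre : ∀ z ∈ ball (0 : ℂ) 1, (f z).re ≤ 0)
    (h0 : (f 0).re < 0) {z : ℂ} (hz : z ∈ ball (0 : ℂ) 1) :
    ‖f z - f 0‖ ≤ ‖z‖ * ‖f z + conj (f 0)‖ := by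
  have hden : ∀ w ∈ ball (0 : ℂ) 1, f w + conj (f 0) ≠ 0 := fun w hw h => by
    have := congrArg re h
    simp only [add_re, conj_re, zero_re] at this
    linarith [hre w hw]
  -- the Cayley transform sending the left half-plane to the disc and `f 0` to `0`
  set φ : ℂ → ℂ := fun w => (f w - f 0) / (f w + conj (f 0))
  have hmaps : Set.MapsTo φ (ball 0 1) (closedBall 0 1) := fun w hw => by
    rw [mem_closedBall_zero_iff, norm_div, div_le_one (norm_pos_iff.2 (hden w hw)),
      ← sq_le_sq₀ (norm_nonneg _) (norm_nonneg _), Complex.sq_norm, Complex.sq_norm,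
      ← sub_nonneg, normSq_add_conj_sub_normSq_sub]
    nlinarith [hre w hw]
  have hφ : ‖φ z‖ ≤ ‖z‖ :=
    norm_le_norm_of_mapsTo_ball ((hd.sub_const _).div (hd.add_const _) hden) hmaps
      (by simp [φ]) (mem_ball_zero_iff.1 hz)
  calc ‖f z - f 0‖ = ‖φ z‖ * ‖f z + conj (f 0)‖ := by
        rw [norm_div, div_mul_cancel₀ _ (norm_ne_zero_iff.2 (hden z hz))]
    _ ≤ ‖z‖ * ‖f z + conj (f 0)‖ := by gcongr

theorem norm_sub_le_mul_norm_add_conj {f : ℂ → ℂ}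
    (hd : DifferentiableOn ℂ f (ball 0 1)) (hre : ∀ z ∈ ball (0 : ℂ) 1, (f z).re ≤ 0)
    {z : ℂ} (hz : z ∈ ball (0 : ℂ) 1) :
    ‖f z - f 0‖ ≤ ‖z‖ * ‖f z + conj (f 0)‖ := by
  have hz1 : ‖z‖ ≤ 1 := (mem_ball_zero_iff.1 hz).le
  refine le_of_forall_pos_le_add fun ε hε => ?_
  -- shifting `f` by `-ε/2` makes `Re f 0` negative without changing `f z - f 0`
  have hshift := norm_sub_le_mul_norm_add_conj_of_re_neg (f := fun w => f w - (ε / 2 : ℝ))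
    (hd.sub_const _) (fun w hw => by simp only [sub_re, ofReal_re]; linarith [hre w hw, hε])
    (by simp only [sub_re, ofReal_re]; linarith [hre 0 (mem_ball_self one_pos)]) hz
  rw [show f z - (ε / 2 : ℝ) - (f 0 - (ε / 2 : ℝ)) = f z - f 0 by ring,
    show f z - (ε / 2 : ℝ) + conj (f 0 - (ε / 2 : ℝ)) = f z + conj (f 0) - ε by
      rw [map_sub, conj_ofReal]; push_cast; ring] at hshift
  calc ‖f z - f 0‖ ≤ ‖z‖ * ‖(f z + conj (f 0)) - (ε : ℂ)‖ := hshift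
    _ ≤ ‖z‖ * (‖f z + conj (f 0)‖ + ε) := by
        gcongr; exact (norm_sub_le _ _).trans_eq (by simp [hε.le])
    _ ≤ ‖z‖ * ‖f z + conj (f 0)‖ + ε := by nlinarith [norm_nonneg z]

theorem sq_re_sub_add_sq_im_sub_le {f : ℂ → ℂ}
    (hd : DifferentiableOn ℂ f (ball 0 1)) (hre : ∀ z ∈ ball (0 : ℂ) 1, (f z).re ≤ 0)
    {r : ℝ} (hr₀ : 0 ≤ r) (hr₁ : r < 1) :
    ((f r).re - (f 0).re) ^ 2 + (1 - r ^ 2) * ((f r).im - (f 0).im) ^ 2 ≤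
      r ^ 2 * ((f r).re + (f 0).re) ^ 2 := by
  have h := norm_sub_le_mul_norm_add_conj hd hre (ofReal_mem_ball_zero_one hr₀ hr₁)
  rw [norm_real, Real.norm_of_nonneg hr₀] at h
  have hsq := pow_le_pow_left₀ (norm_nonneg _) h 2
  rw [mul_pow, Complex.sq_norm, Complex.sq_norm] at hsq
  simp only [normSq_apply, add_re, add_im, sub_re, sub_im, conj_re, conj_im] at hsq
  nlinarith

theorem re_apply_zero_mul_one_add_le {f : ℂ → ℂ}
    (hd : DifferentiableOn ℂ f (ball 0 1)) (hre : ∀ z ∈ ball (0 : ℂ) 1, (f z).re ≤ 0)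
    {r : ℝ} (hr₀ : 0 ≤ r) (hr₁ : r < 1) :
    (f 0).re * (1 + r) ≤ (f r).re * (1 - r) := by
  have h := sq_re_sub_add_sq_im_sub_le hd hre hr₀ hr₁
  have hsum : (f r).re + (f 0).re ≤ 0 := by
    linarith [hre _ (ofReal_mem_ball_zero_one hr₀ hr₁), hre 0 (mem_ball_self one_pos)]
  have hre_sq : ((f 0).re - (f r).re) ^ 2 ≤ (r * ((f r).re + (f 0).re)) ^ 2 := by
    nlinarith [mul_nonneg (by nlinarith : (0 : ℝ) ≤ 1 - r ^ 2) (sq_nonneg ((f r).im - (f 0).im))]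
  nlinarith [mul_nonneg hr₀ (neg_nonneg.2 hsum)]

theorem apply_ofReal_eq_of_re_mul_eq {f : ℂ → ℂ}
    (hd : DifferentiableOn ℂ f (ball 0 1)) (hre : ∀ z ∈ ball (0 : ℂ) 1, (f z).re ≤ 0)
    {r : ℝ} (hr₀ : 0 ≤ r) (hr₁ : r < 1) (heq : (f r).re * (1 - r) = (f 0).re * (1 + r)) :
    f r = I * (f 0).im - (f 0).re * ((r + 1) / (r - 1)) := by
  have h := sq_re_sub_add_sq_im_sub_le hd hre hr₀ hr₁
  have him : (f r).im = (f 0).im := by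
    have hre_sq : ((f r).re - (f 0).re) ^ 2 = r ^ 2 * ((f r).re + (f 0).re) ^ 2 := by
      rw [← mul_pow]; congr 1; linarith
    have hpos : 0 < 1 - r ^ 2 := by nlinarith
    have him_sq : ((f r).im - (f 0).im) ^ 2 ≤ 0 := by nlinarith
    exact sub_eq_zero.1 (pow_eq_zero_iff two_ne_zero |>.1 (le_antisymm him_sq (sq_nonneg _)))
  have hr1 : r - 1 ≠ 0 := by linarith
  rw [← ofReal_add_one_div_sub_one]
  apply Complex.ext
  · simp only [sub_re, mul_re, I_re, I_im, ofReal_re, ofReal_im]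
    field_simp
    linarith
  · simp only [sub_im, mul_im, I_re, I_im, ofReal_re, ofReal_im]
    rw [him]; ring

theorem eqOn_of_eventually_ofReal_eq {U : Set ℂ} {f g : ℂ → ℂ} {x : ℝ} (hU : IsOpen U)
    (hUc : IsPreconnected U) (hx : (x : ℂ) ∈ U) (hf : DifferentiableOn ℂ f U)
    (hg : DifferentiableOn ℂ g U) (h : ∀ᶠ r : ℝ in 𝓝[>] x, f r = g r) : Set.EqOn f g U := by
  have hmap : Tendsto ((↑) : ℝ → ℂ) (𝓝[>] x) (𝓝[≠] (x : ℂ)) :=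
    continuous_ofReal.continuousWithinAt.tendsto_nhdsWithin fun r hr => by
      simpa using (Set.mem_Ioi.1 hr).ne'
  exact (hf.analyticOnNhd hU).eqOn_of_preconnected_of_frequently_eq (hg.analyticOnNhd hU) hUc hx
    (hmap.frequently h.frequently)

/-- If holomorphic functions `f 1, ..., f n` on the unit disc have nonpositive real part and
sum to `(z+1)/(z-1)`, then each `f j z = i·Im(f j 0) - Re(f j 0)·(z+1)/(z-1)`. -/
theorem stmt_0 (n : ℕ) (f : Fin n → ℂ → ℂ)
    (hdiff : ∀ j, DifferentiableOn ℂ (f j) (ball (0 : ℂ) 1))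
    (hre : ∀ j, ∀ z ∈ ball (0 : ℂ) 1, (f j z).re ≤ 0)
    (hsum : ∀ z ∈ ball (0 : ℂ) 1, ∑ j, f j z = (z + 1) / (z - 1)) :
    ∀ j, ∀ z ∈ ball (0 : ℂ) 1,
      f j z = Complex.I * ((f j 0).im : ℂ) - ((f j 0).re : ℂ) * ((z + 1) / (z - 1)) := by
  intro j
  have hsum_re : ∀ r : ℝ, 0 ≤ r → r < 1 → (∑ k, (f k r).re) * (1 - r) = -(1 + r) := by
    intro r hr₀ hr₁
    rw [← re_sum, hsum r (ofReal_mem_ball_zero_one hr₀ hr₁), ← ofReal_add_one_div_sub_one,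
      ofReal_re, div_mul_eq_mul_div, div_eq_iff (by linarith)]
    ring
  have hsum_re_zero : ∑ k, (f k 0).re = -1 := by simpa using hsum_re 0 le_rfl one_pos
  -- summing the Harnack inequalities gives an equality, so each of them is an equality
  have hharnack_eq : ∀ r : ℝ, 0 ≤ r → r < 1 → (f j r).re * (1 - r) = (f j 0).re * (1 + r) := by
    intro r hr₀ hr₁
    have htot : ∑ k, (f k 0).re * (1 + r) = ∑ k, (f k r).re * (1 - r) := by
      rw [← Finset.sum_mul, ← Finset.sum_mul, hsum_re r hr₀ hr₁, hsum_re_zero]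
      ring
    exact ((Finset.sum_eq_sum_iff_of_le fun k _ =>
      re_apply_zero_mul_one_add_le (hdiff k) (hre k) hr₀ hr₁).1 htot j (Finset.mem_univ j)).symm
  refine eqOn_of_eventually_ofReal_eq (x := 0) isOpen_ball (convex_ball 0 1).isPreconnected
    (by simp) (hdiff j)
    ((differentiableOn_const _).sub ((differentiableOn_const _).mul
      differentiableOn_add_one_div_sub_one)) ?_
  filter_upwards [Ioo_mem_nhdsGT one_pos] with r hr
  exact apply_ofReal_eq_of_re_mul_eq (hdiff j) (hre j) hr.1.le hr.2 (hharnack_eq r hr.1.le hr.2)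
end

section
/- Let ψ : 𝔻 → ℂ be holomorphic with |ψ(z)| ≤ 1 and ψ(z) ≠ 1 for all z ∈ 𝔻. If Re((ψ(z)+1)/(ψ(z)−1)) ≥ Re((z+1)/(z−1)) for all z ∈ 𝔻, then there exist a ∈ ℝ and b ∈ [0,1] such that (ψ(z)+1)/(ψ(z)−1) = ia + b·(z+1)/(z−1) for all z ∈ 𝔻. -/
/-!
Through the Cayley map `cayley z = (1 + z) / (1 - z)` of the disc onto the right half-plane `H`,
the function `Φ(w) = cayley (ψ (cayley⁻¹ w))` is holomorphic on `H` with `0 ≤ Re Φ(w) ≤ Re w`.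
Schwarz's lemma, transported to `H`, gives Julia's inequality at `∞`:
`x Re w Re Φ(x) ≤ Re Φ(w) (x² + |w|²)` for real `x > 0`. Applied to `Φ` and to `w - Φ(w)` and
letting `x → ∞`, it shows that `Re Φ(w) / Re w` is a constant `c ∈ [0, 1]`. Then `Φ(w) - c w` has
zero real part, so it is an imaginary constant.
-/

open Complex Metric
open scoped ComplexConjugate

noncomputable def cayley (z : ℂ) : ℂ := (1 + z) / (1 - z)

noncomputable def cayleyInv (w : ℂ) : ℂ := (w - 1) / (w + 1)

lemma normSq_add_conj (u v : ℂ) :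
    normSq (u + conj v) = normSq (u - v) + 4 * u.re * v.re := by
  simp only [normSq_apply, add_re, add_im, sub_re, sub_im, conj_re, conj_im]
  ring

lemma norm_sub_le_norm_add_conj {u v : ℂ} (hu : 0 ≤ u.re) (hv : 0 ≤ v.re) :
    ‖u - v‖ ≤ ‖u + conj v‖ := by
  rw [norm_def, norm_def, normSq_add_conj]
  gcongr
  nlinarith

lemma add_conj_ne_zero {u v : ℂ} (hu : 0 ≤ u.re) (hv : 0 < v.re) : u + conj v ≠ 0 :=
  ne_zero_of_re_pos (by simp only [add_re, conj_re]; linarith)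

lemma cayley_re (z : ℂ) : (cayley z).re = (1 - normSq z) / normSq (1 - z) := by
  rw [cayley, div_re, ← add_div]
  congr 1
  simp only [normSq_apply, add_re, add_im, sub_re, sub_im, one_re, one_im]
  ring

lemma cayley_re_nonneg {z : ℂ} (hz : ‖z‖ ≤ 1) : 0 ≤ (cayley z).re := by
  rw [cayley_re, ← Complex.sq_norm]
  have : ‖z‖ ^ 2 ≤ 1 := pow_le_one₀ (norm_nonneg z) hz
  exact div_nonneg (by linarith) (normSq_nonneg _)

lemma ne_one_of_norm_lt_one {z : ℂ} (hz : ‖z‖ < 1) : z ≠ 1 := by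
  rintro rfl
  simp at hz

lemma cayley_re_pos {z : ℂ} (hz : ‖z‖ < 1) : 0 < (cayley z).re := by
  have hz1 : 1 - z ≠ 0 := sub_ne_zero.2 (ne_one_of_norm_lt_one hz).symm
  rw [cayley_re, ← Complex.sq_norm]
  have : ‖z‖ ^ 2 < 1 := pow_lt_one₀ (norm_nonneg z) hz two_ne_zero
  exact div_pos (by linarith) (normSq_pos.2 hz1)

lemma add_one_ne_zero_of_re_pos {w : ℂ} (hw : 0 < w.re) : w + 1 ≠ 0 :=
  ne_zero_of_re_pos (by rw [add_re, one_re]; linarith)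

lemma norm_cayleyInv_lt_one {w : ℂ} (hw : 0 < w.re) : ‖cayleyInv w‖ < 1 := by
  have hw1 := add_one_ne_zero_of_re_pos hw
  rw [cayleyInv, norm_div, div_lt_one (norm_pos_iff.2 hw1), norm_def, norm_def]
  have := normSq_add_conj w 1
  rw [map_one, one_re] at this
  exact Real.sqrt_lt_sqrt (normSq_nonneg _) (by linarith)

lemma cayley_cayleyInv {w : ℂ} (hw : w + 1 ≠ 0) : cayley (cayleyInv w) = w := by
  rw [cayley, cayleyInv]
  field_simp
  ring

lemma cayleyInv_cayley {z : ℂ} (hz : z ≠ 1) : cayleyInv (cayley z) = z := by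
  have hz1 : 1 - z ≠ 0 := sub_ne_zero.2 hz.symm
  rw [cayley, cayleyInv]
  field_simp
  ring

lemma div_sub_one_eq_neg_cayley (z : ℂ) : (z + 1) / (z - 1) = -cayley z := by
  rw [cayley, ← neg_div_neg_eq, neg_sub, ← neg_div, add_comm]

lemma differentiableOn_cayley : DifferentiableOn ℂ cayley {1}ᶜ :=
  (differentiableOn_const 1 |>.add differentiableOn_id).div
    (differentiableOn_const 1 |>.sub differentiableOn_id)
    fun _ hz => sub_ne_zero.2 (Ne.symm hz)

lemma differentiableOn_cayleyInv : DifferentiableOn ℂ cayleyInv {w | 0 < w.re} :=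
  (differentiableOn_id.sub_const 1).div (differentiableOn_id.add_const 1)
    fun _ => add_one_ne_zero_of_re_pos

lemma nonpos_of_forall_sq_mul_le {d K : ℝ} (h : ∀ x : ℝ, 0 < x → x ^ 2 * d ≤ K) : d ≤ 0 := by
  by_contra! hd
  set x := |K| / d + 1
  have hx : 1 ≤ x := le_add_of_nonneg_left (by positivity)
  have hxd : x * d = |K| + d := by simp only [x]; field_simp
  have := h x (by linarith)
  nlinarith [le_abs_self K, mul_le_mul_of_nonneg_right hx (by positivity : 0 ≤ |K| + d)]

section RightHalfPlane

variable {Φ : ℂ → ℂ}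

/-- The Schwarz–Pick lemma for the right half-plane, with one point on the real axis. -/
lemma norm_sub_mul_norm_add_le (hd : DifferentiableOn ℂ Φ {w | 0 < w.re})
    (h0 : ∀ w : ℂ, 0 < w.re → 0 ≤ (Φ w).re) {x : ℝ} (hx : 0 < x) (hp : 0 < (Φ x).re)
    {w : ℂ} (hw : 0 < w.re) :
    ‖Φ w - Φ x‖ * ‖w + x‖ ≤ ‖w - x‖ * ‖Φ w + conj (Φ x)‖ := by
  set p := Φ x
  have hM : Set.MapsTo (fun ζ => x * cayley ζ) (ball 0 1) {w | 0 < w.re} := fun ζ hζ => by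
    simpa only [Set.mem_ofPred_eq, re_ofReal_mul] using
      mul_pos hx (cayley_re_pos (mem_ball_zero_iff.1 hζ))
  set s : ℂ → ℂ := fun ζ => (Φ (x * cayley ζ) - p) / (Φ (x * cayley ζ) + conj p)
  have hΦM : DifferentiableOn ℂ (fun ζ => Φ (x * cayley ζ)) (ball 0 1) :=
    hd.comp ((differentiableOn_cayley.mono fun ζ hζ =>
      ne_one_of_norm_lt_one (mem_ball_zero_iff.1 hζ)).const_mul _) hM
  have hden : ∀ ζ ∈ ball (0 : ℂ) 1, Φ (x * cayley ζ) + conj p ≠ 0 :=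
    fun ζ hζ => add_conj_ne_zero (h0 _ (hM hζ)) hp
  have hs : DifferentiableOn ℂ s (ball 0 1) := (hΦM.sub_const p).div (hΦM.add_const _) hden
  have hs_maps : Set.MapsTo s (ball 0 1) (closedBall 0 1) := fun ζ hζ => by
    rw [mem_closedBall_zero_iff, norm_div, div_le_one (norm_pos_iff.2 (hden ζ hζ))]
    exact norm_sub_le_norm_add_conj (h0 _ (hM hζ)) hp.le
  have hs0 : s 0 = 0 := by simp [s, cayley, p]
  have hx0 : (x : ℂ) ≠ 0 := ofReal_ne_zero.2 hx.ne'
  have hwx : w + x ≠ 0 := ne_zero_of_re_pos (by simp only [add_re, ofReal_re]; linarith)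
  have hwx' : w / x + 1 ≠ 0 := by rw [div_add_one hx0]; exact div_ne_zero hwx hx0
  set ζ₀ := cayleyInv (w / x)
  have hζ₀ : ‖ζ₀‖ < 1 := norm_cayleyInv_lt_one (by rw [div_ofReal_re]; positivity)
  have hMζ₀ : x * cayley ζ₀ = w := by rw [cayley_cayleyInv hwx']; field_simp
  have hζ₀_eq : ζ₀ = (w - x) / (w + x) := by simp only [ζ₀, cayleyInv]; field_simp
  have hschwarz := norm_le_norm_of_mapsTo_ball hs hs_maps hs0 hζ₀
  simp only [s, hMζ₀] at hschwarz
  rw [hζ₀_eq, norm_div, norm_div] at hschwarz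
  have hden₀ : Φ w + conj p ≠ 0 := add_conj_ne_zero (h0 w hw) hp
  exact (div_le_div_iff₀ (norm_pos_iff.2 hden₀) (norm_pos_iff.2 hwx)).1 hschwarz

/-- Julia's inequality at the boundary point `∞` of the right half-plane. -/
lemma mul_re_le_re_mul_sq_add_normSq (hd : DifferentiableOn ℂ Φ {w | 0 < w.re})
    (h0 : ∀ w : ℂ, 0 < w.re → 0 ≤ (Φ w).re) {x : ℝ} (hx : 0 < x) {w : ℂ} (hw : 0 < w.re) :
    x * w.re * (Φ x).re ≤ (Φ w).re * (x ^ 2 + normSq w) := by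
  have hA := h0 w hw
  rcases (h0 x (by simpa using hx)).eq_or_lt with hB | hB
  · rw [← hB, mul_zero]
    exact mul_nonneg hA (add_nonneg (sq_nonneg x) (normSq_nonneg w))
  have hpick := norm_sub_mul_norm_add_le hd h0 hx hB hw
  have hsq : normSq (Φ w - Φ x) * normSq (w + x)
      ≤ normSq (w - x) * normSq (Φ w + conj (Φ x)) := by
    simp only [← Complex.sq_norm, ← mul_pow]
    exact pow_le_pow_left₀ (by positivity) hpick 2
  have hwx := normSq_add_conj w x
  rw [conj_ofReal, ofReal_re] at hwx
  rw [hwx, normSq_add_conj] at hsq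
  have hN : ((Φ w).re - (Φ x).re) ^ 2 ≤ normSq (Φ w - Φ x) := by
    rw [normSq_apply, sub_re, sub_im]
    nlinarith [sq_nonneg ((Φ w).im - (Φ x).im)]
  have hm : normSq (w - x) + 2 * x * w.re = x ^ 2 + normSq w := by
    simp only [normSq_apply, sub_re, sub_im, ofReal_re, ofReal_im]
    ring
  have hxw := mul_pos hx hw
  have hmain : normSq (Φ w - Φ x) * (x * w.re) ≤ (Φ w).re * (Φ x).re * normSq (w - x) := by
    nlinarith
  have hfin := (mul_le_mul_of_nonneg_right hN hxw.le).trans hmain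
  rw [← hm]
  refine le_of_mul_le_mul_left ?_ hB
  nlinarith [mul_nonneg (sq_nonneg (Φ w).re) hxw.le]

lemma re_mul_re_le_re_mul_re (hd : DifferentiableOn ℂ Φ {w | 0 < w.re})
    (h0 : ∀ w : ℂ, 0 < w.re → 0 ≤ (Φ w).re) (h1 : ∀ w : ℂ, 0 < w.re → (Φ w).re ≤ w.re)
    {w₁ w₂ : ℂ} (hw₁ : 0 < w₁.re) (hw₂ : 0 < w₂.re) :
    (Φ w₂).re * w₁.re ≤ (Φ w₁).re * w₂.re := by
  have hd' : DifferentiableOn ℂ (fun w => w - Φ w) {w | 0 < w.re} := differentiableOn_id.sub hd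
  have h0' : ∀ w : ℂ, 0 < w.re → 0 ≤ (w - Φ w).re := fun w hw => by
    rw [sub_re, sub_nonneg]; exact h1 w hw
  suffices (Φ w₂).re * w₁.re - (Φ w₁).re * w₂.re ≤ 0 by linarith
  -- Julia's inequality for `Φ` at `w₁` plus that for `w - Φ w` at `w₂` bounds `x ^ 2 * _`
  -- uniformly in `x`.
  refine nonpos_of_forall_sq_mul_le (K := (Φ w₁).re * w₂.re * normSq w₁
    + (w₂.re - (Φ w₂).re) * w₁.re * normSq w₂) fun x hx => ?_
  have e₁ := mul_re_le_re_mul_sq_add_normSq hd h0 hx hw₁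
  have e₂ := mul_re_le_re_mul_sq_add_normSq hd' h0' hx hw₂
  simp only [sub_re, ofReal_re] at e₂
  nlinarith [mul_le_mul_of_nonneg_left e₁ hw₂.le, mul_le_mul_of_nonneg_left e₂ hw₁.le]

theorem exists_eq_ofReal_mul_add_mul_I (hd : DifferentiableOn ℂ Φ {w | 0 < w.re})
    (h0 : ∀ w : ℂ, 0 < w.re → 0 ≤ (Φ w).re) (h1 : ∀ w : ℂ, 0 < w.re → (Φ w).re ≤ w.re) :
    ∃ c t : ℝ, 0 ≤ c ∧ c ≤ 1 ∧ ∀ w : ℂ, 0 < w.re → Φ w = c * w + t * I := by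
  have hone : (0 : ℝ) < (1 : ℂ).re := by simp
  set c := (Φ 1).re
  have hre : ∀ w : ℂ, 0 < w.re → (Φ w - c * w).re = 0 := fun w hw => by
    have h₁ := re_mul_re_le_re_mul_re hd h0 h1 hw hone
    have h₂ := re_mul_re_le_re_mul_re hd h0 h1 hone hw
    rw [one_re, mul_one] at h₁ h₂
    rw [sub_re, re_ofReal_mul]
    linarith
  have hopen : IsOpen {w : ℂ | 0 < w.re} := isOpen_lt continuous_const continuous_re
  obtain ⟨t, ht⟩ := AnalyticOnNhd.eq_re_add_const_mul_I_of_re_eq_const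
    ((hd.sub (differentiableOn_id.const_mul _)).analyticOnNhd hopen) hre hopen
    ((convex_halfSpace_re_gt 0).isConnected ⟨1, hone⟩)
  refine ⟨c, t, h0 1 hone, by simpa using h1 1 hone, fun w hw => ?_⟩
  have h := ht w hw
  simp only [Pi.sub_apply, ofReal_zero, zero_add] at h
  linear_combination h

end RightHalfPlane

/-- A holomorphic self-map of the closed disc on `𝔻`, omitting the value `1`, satisfying
`Re((ψ+1)/(ψ-1)) ≥ Re((z+1)/(z-1))` is of the form `(ψ+1)/(ψ-1) = ia + b (z+1)/(z-1)`. -/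
theorem stmt_5 (ψ : ℂ → ℂ)
    (hdiff : DifferentiableOn ℂ ψ (ball (0 : ℂ) 1))
    (hcontr : ∀ z ∈ ball (0 : ℂ) 1, ‖ψ z‖ ≤ 1)
    (hne : ∀ z ∈ ball (0 : ℂ) 1, ψ z ≠ 1)
    (hineq : ∀ z ∈ ball (0 : ℂ) 1,
      ((z + 1) / (z - 1)).re ≤ ((ψ z + 1) / (ψ z - 1)).re) :
    ∃ a b : ℝ, 0 ≤ b ∧ b ≤ 1 ∧ ∀ z ∈ ball (0 : ℂ) 1,
      (ψ z + 1) / (ψ z - 1) = Complex.I * (a : ℂ) + (b : ℂ) * ((z + 1) / (z - 1)) := by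
  simp only [div_sub_one_eq_neg_cayley, neg_re, neg_le_neg_iff] at hineq ⊢
  have hmaps : Set.MapsTo cayleyInv {w | 0 < w.re} (ball 0 1) :=
    fun w hw => mem_ball_zero_iff.2 (norm_cayleyInv_lt_one hw)
  have hd : DifferentiableOn ℂ (cayley ∘ ψ) (ball 0 1) := differentiableOn_cayley.comp hdiff hne
  obtain ⟨c, t, hc₀, hc₁, hlin⟩ := exists_eq_ofReal_mul_add_mul_I
    (hd.comp differentiableOn_cayleyInv hmaps)
    (fun w hw => cayley_re_nonneg (hcontr _ (hmaps hw)))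
    (fun w hw => by
      simpa only [Function.comp_apply, cayley_cayleyInv (add_one_ne_zero_of_re_pos hw)]
        using hineq _ (hmaps hw))
  refine ⟨-t, c, hc₀, hc₁, fun z hz => ?_⟩
  have hz := mem_ball_zero_iff.1 hz
  have hΦz := hlin (cayley z) (cayley_re_pos hz)
  simp only [Function.comp_apply, cayleyInv_cayley (ne_one_of_norm_lt_one hz)] at hΦz
  rw [hΦz]
  push_cast
  ring
end

section
/- Let T₁, ..., Tₙ be commuting contractions on a complex Hilbert space H such that the product T₁T₂⋯Tₙ is an isometry. Then each Tⱼ is an isometry. -/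
/-!
Since the `Tⱼ` commute, the product factors as `P = Q Tⱼ` with `Q` the product of the other
contractions, so `‖Q‖ ≤ 1`. Hence `‖x‖ = ‖Q (Tⱼ x)‖ ≤ ‖Tⱼ x‖ ≤ ‖x‖`.
-/

theorem List.norm_prod_le_one {α : Type*} [SeminormedRing α] (h1 : ‖(1 : α)‖ ≤ 1) {l : List α}
    (hl : ∀ a ∈ l, ‖a‖ ≤ 1) : ‖l.prod‖ ≤ 1 := by
  induction l with
  | nil => simpa using h1
  | cons a l ih =>
    rw [List.prod_cons]
    exact (norm_mul_le _ _).trans <| mul_le_one₀ (hl a mem_cons_self) (norm_nonneg _)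
      (ih fun b hb => hl b (mem_cons_of_mem a hb))

namespace ContinuousLinearMap

variable {𝕜 E F G : Type*} [NontriviallyNormedField 𝕜]
  [SeminormedAddCommGroup E] [NormedSpace 𝕜 E]
  [SeminormedAddCommGroup F] [NormedSpace 𝕜 F]
  [SeminormedAddCommGroup G] [NormedSpace 𝕜 G]

theorem norm_apply_eq_of_norm_comp_apply_eq {A : E →L[𝕜] F} {B : F →L[𝕜] G}
    (hA : ‖A‖ ≤ 1) (hB : ‖B‖ ≤ 1) {x : E} (hx : ‖B (A x)‖ = ‖x‖) : ‖A x‖ = ‖x‖ :=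
  le_antisymm (A.le_of_opNorm_le hA x |>.trans_eq (one_mul _)) <|
    hx.symm.le.trans <| (B.le_of_opNorm_le hB (A x)).trans_eq (one_mul _)

theorem norm_apply_eq_of_mem_of_norm_prod_apply_eq {l : List (E →L[𝕜] E)}
    (hl : ∀ a ∈ l, ‖a‖ ≤ 1) (hcomm : ∀ a ∈ l, ∀ b ∈ l, a * b = b * a)
    {x : E} (hx : ‖l.prod x‖ = ‖x‖) {a : E →L[𝕜] E} (ha : a ∈ l) : ‖a x‖ = ‖x‖ := by
  classical
  have hfactor : l.prod = (l.erase a).prod * a := by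
    rw [← List.prod_erase_of_comm ha hcomm]
    exact (Commute.list_prod_right _ _ fun b hb => hcomm a ha b (List.mem_of_mem_erase hb)).eq
  have hrest : ‖(l.erase a).prod‖ ≤ 1 :=
    List.norm_prod_le_one norm_id_le fun b hb => hl b (List.mem_of_mem_erase hb)
  rw [hfactor] at hx
  exact norm_apply_eq_of_norm_comp_apply_eq (hl a ha) hrest hx

end ContinuousLinearMap

/-- Commuting contractions whose product is an isometry are all isometries. -/
theorem stmt_12 {H : Type*} [NormedAddCommGroup H] [InnerProductSpace ℂ H]
    (n : ℕ) (T : Fin n → H →L[ℂ] H)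
    (hcontr : ∀ j, ‖T j‖ ≤ 1)
    (hcomm : ∀ j k, T j * T k = T k * T j)
    (hiso : ∀ x : H, ‖(List.ofFn T).prod x‖ = ‖x‖) :
    ∀ j, ∀ x : H, ‖T j x‖ = ‖x‖ := by
  intro j x
  refine ContinuousLinearMap.norm_apply_eq_of_mem_of_norm_prod_apply_eq ?_ ?_ (hiso x)
    (List.mem_ofFn.2 ⟨j, rfl⟩)
  · simpa only [List.forall_mem_ofFn_iff] using hcontr
  · simpa only [List.forall_mem_ofFn_iff] using hcomm
end

section
/- Let U be a unitary and P an orthogonal projection on a complex Hilbert space E, and define π(z) = U(P^⊥ + zP) for z in the open unit disc, where P^⊥ = I − P. Then 1 is an eigenvalue of π(z) for some z ∈ 𝔻 if and only if there exists a nonzero x in the range of P^⊥ with Ux = x. -/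
open Complex Metric ContinuousLinearMap

/-- For `U` unitary and `P` an orthogonal projection, `π(z) = U(P^⊥ + zP)` has eigenvalue `1`
for some `z ∈ 𝔻` iff `U` fixes a nonzero vector in the range of `P^⊥` (i.e. the kernel of `P`). -/
theorem stmt_13 {E : Type*} [NormedAddCommGroup E] [InnerProductSpace ℂ E] [CompleteSpace E]
    (U P : E →L[ℂ] E)
    (hU1 : U * adjoint U = 1) (hU2 : adjoint U * U = 1)
    (hP : IsSelfAdjoint P) (hP2 : P * P = P) :
    (∃ z ∈ ball (0 : ℂ) 1, ∃ x : E, x ≠ 0 ∧ (U * ((1 - P) + z • P)) x = x) ↔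
      ∃ x : E, x ≠ 0 ∧ P x = 0 ∧ U x = x := by
  have hiso : ∀ y : E, ‖U y‖ = ‖y‖ := by
    rw [norm_map_iff_adjoint_comp_self]
    exact hU2
  have hPP : ∀ y : E, P (P y) = P y := by
    intro y
    have := congrArg (fun T => T y) hP2
    simpa using this
  have horth : ∀ x : E, (inner ℂ ((1 - P) x) (P x) : ℂ) = 0 := by
    intro x
    have h1 : (inner ℂ (P x) (P x) : ℂ) = inner ℂ x (P x) := by
      nth_rewrite 1 [← hP.adjoint_eq]
      rw [adjoint_inner_left, hPP]
    simp only [ContinuousLinearMap.sub_apply, ContinuousLinearMap.one_apply,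
      inner_sub_left, h1]
    ring
  constructor
  · rintro ⟨z, hz, x, hx, hx1⟩
    simp only [mem_ball, dist_zero_right] at hz
    simp only [ContinuousLinearMap.mul_apply, ContinuousLinearMap.add_apply,
      ContinuousLinearMap.smul_apply] at hx1
    have horth2 : (inner ℂ ((1 - P) x) (z • P x) : ℂ) = 0 := by
      rw [inner_smul_right, horth, mul_zero]
    have hnorm : ‖(1 - P) x + z • P x‖ = ‖x‖ := by
      conv_rhs => rw [← hx1]
      exact (hiso _).symm
    have e1 := norm_add_sq_eq_norm_sq_add_norm_sq_of_inner_eq_zero _ _ horth2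
    have e2 := norm_add_sq_eq_norm_sq_add_norm_sq_of_inner_eq_zero _ _ (horth x)
    have e3 : (1 - P) x + P x = x := by
      simp [ContinuousLinearMap.sub_apply]
    rw [e3] at e2
    rw [hnorm] at e1
    have hsq : ‖z • P x‖ * ‖z • P x‖ = ‖P x‖ * ‖P x‖ := by linarith
    have hPx : P x = 0 := by
      rw [norm_smul] at hsq
      by_contra h
      have hpos : 0 < ‖P x‖ := norm_pos_iff.mpr h
      have h1 : ‖z‖ * ‖P x‖ < ‖P x‖ := mul_lt_of_lt_one_left hpos hz
      have h2 : 0 ≤ ‖z‖ * ‖P x‖ := by positivity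
      nlinarith
    have hfix : (1 - P) x + z • P x = x := by
      simp [ContinuousLinearMap.sub_apply, hPx]
    rw [hfix] at hx1
    exact ⟨x, hx, hPx, hx1⟩
  · rintro ⟨x, hx, hPx, hUx⟩
    refine ⟨0, by simp, x, hx, ?_⟩
    simp [ContinuousLinearMap.mul_apply, ContinuousLinearMap.sub_apply, hPx, hUx]
end

section
/- Let ψ : 𝔻 → B(E) be holomorphic with ‖ψ(z)‖ ≤ 1 for all z in the open unit disc 𝔻. If ψ(z₀)x = x for some z₀ ∈ 𝔻 and some x ∈ E, then ψ(z)x = x for all z ∈ 𝔻. Consequently, 1 ∈ σ_p(ψ(z₀)) for some z₀ ∈ 𝔻 implies 1 ∈ σ_p(ψ(z)) for every z ∈ 𝔻. -/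
open Complex Metric

local notation "⟪" x ", " y "⟫" => @inner ℂ _ _ x y

lemma aux_eq {E : Type*} [NormedAddCommGroup E] [InnerProductSpace ℂ E]
    (x y : E) (h1 : ⟪x, y⟫ = (‖x‖ : ℂ)^2) (h2 : ‖y‖ ≤ ‖x‖) : y = x := by
  have hre : re ⟪y, x⟫ = ‖x‖^2 := by
    rw [← inner_conj_symm, h1]
    simp [← Complex.ofReal_pow]
  have : ‖y - x‖^2 = ‖y‖^2 - 2 * re ⟪y, x⟫ + ‖x‖^2 := @norm_sub_sq ℂ _ _ _ _ y x
  have hle : ‖y - x‖^2 ≤ 0 := by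
    rw [this, hre]
    nlinarith [norm_nonneg x, norm_nonneg y]
  have : ‖y - x‖ = 0 := by nlinarith [norm_nonneg (y - x)]
  have := norm_eq_zero.mp this
  linear_combination (norm := abel) this

/-- If a holomorphic contraction-valued function `ψ` on the disc fixes a vector at one point,
it fixes it everywhere; consequently eigenvalue `1` at one point implies it at every point. -/
theorem stmt_14 {E : Type*} [NormedAddCommGroup E] [InnerProductSpace ℂ E]
    (ψ : ℂ → (E →L[ℂ] E))
    (hdiff : DifferentiableOn ℂ ψ (ball (0 : ℂ) 1))
    (hcontr : ∀ z ∈ ball (0 : ℂ) 1, ‖ψ z‖ ≤ 1)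
    (z₀ : ℂ) (hz₀ : z₀ ∈ ball (0 : ℂ) 1) :
    (∀ x : E, ψ z₀ x = x → ∀ z ∈ ball (0 : ℂ) 1, ψ z x = x) ∧
    ((∃ x : E, x ≠ 0 ∧ ψ z₀ x = x) →
      ∀ z ∈ ball (0 : ℂ) 1, ∃ x : E, x ≠ 0 ∧ ψ z x = x) := by
  have main : ∀ x : E, ψ z₀ x = x → ∀ z ∈ ball (0 : ℂ) 1, ψ z x = x := by
    intro x hx z hz
    set g : ℂ → ℂ := fun z => ⟪x, ψ z x⟫ with hg
    have hgd : DifferentiableOn ℂ g (ball (0 : ℂ) 1) := by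
      have h1 : DifferentiableOn ℂ (fun z => ψ z x) (ball (0 : ℂ) 1) :=
        (ContinuousLinearMap.apply ℂ E x).differentiable.comp_differentiableOn hdiff
      exact (innerSL ℂ x).differentiable.comp_differentiableOn h1
    have hbound : ∀ w ∈ ball (0 : ℂ) 1, ‖g w‖ ≤ ‖x‖^2 := by
      intro w hw
      calc ‖g w‖ ≤ ‖x‖ * ‖ψ w x‖ := norm_inner_le_norm x _
        _ ≤ ‖x‖ * (‖ψ w‖ * ‖x‖) := by
            gcongr; exact (ψ w).le_opNorm x
        _ ≤ ‖x‖ * (1 * ‖x‖) := by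
            have := hcontr w hw
            have := (ψ w).opNorm_nonneg
            nlinarith [mul_nonneg (norm_nonneg x) (norm_nonneg x)]
        _ = ‖x‖^2 := by ring
    have hg0 : g z₀ = (‖x‖ : ℂ)^2 := by
      simp only [hg, hx, inner_self_eq_norm_sq_to_K]
      norm_num
    have hmax : IsMaxOn (norm ∘ g) (ball (0 : ℂ) 1) z₀ := by
      intro w hw
      simp only [Function.comp_apply, Set.mem_setOf_eq, hg0]
      calc ‖g w‖ ≤ ‖x‖^2 := hbound w hw
        _ = ‖((‖x‖:ℂ))^2‖ := by norm_num
    have := Complex.eqOn_of_isPreconnected_of_isMaxOn_norm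
      (convex_ball (0:ℂ) 1).isPreconnected isOpen_ball hgd hz₀ hmax hz
    rw [Function.const_apply, hg0] at this
    exact aux_eq x (ψ z x) this (((ψ z).le_opNorm x).trans (by
      nlinarith [hcontr z hz, norm_nonneg x]))
  refine ⟨main, ?_⟩
  rintro ⟨x, hx0, hx⟩ z hz
  exact ⟨x, hx0, main x hx z hz⟩
end

section
/- Let ψ₁ : 𝔻 → ℂ be holomorphic with |ψ₁(z)| ≤ 1, ψ₁(z) ≠ 1, and Re((ψ₁(z)+1)/(ψ₁(z)−1)) ≥ Re((z+1)/(z−1)) for all z ∈ 𝔻. Define h₁(z) = (z+1)/(z−1) − (ψ₁(z)+1)/(ψ₁(z)−1) and ψ₂(z) = (h₁(z)+1)/(h₁(z)−1). Then ψ₂ is holomorphic on 𝔻, |ψ₂(z)| ≤ 1, ψ₂(z) ≠ 1 for all z ∈ 𝔻, and (ψ₁(z)+1)/(ψ₁(z)−1) + (ψ₂(z)+1)/(ψ₂(z)−1) = (z+1)/(z−1) for all z ∈ 𝔻. -/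
open Complex Metric

/-! The map `w ↦ (w + 1) / (w - 1)` is an involution of `ℂ ∖ {1}` that sends the closed left
half-plane into the closed unit disc. The hypothesis says exactly that
`h₁ = (z + 1) / (z - 1) - (ψ₁ + 1) / (ψ₁ - 1)` takes values in that half-plane, so
`ψ₂`, the image of `h₁` under the involution, is a holomorphic self-map of the disc whose
own image under the involution is `h₁` again. -/

namespace Complex

theorem sub_one_ne_zero_of_re_nonpos {w : ℂ} (hw : w.re ≤ 0) : w - 1 ≠ 0 := by
  intro h
  have : (w - 1).re = 0 := by rw [h, zero_re]
  rw [sub_re, one_re] at this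
  linarith

theorem norm_add_one_le_norm_sub_one_of_re_nonpos {w : ℂ} (hw : w.re ≤ 0) :
    ‖w + 1‖ ≤ ‖w - 1‖ := by
  refine (pow_le_pow_iff_left₀ (norm_nonneg _) (norm_nonneg _) two_ne_zero).mp ?_
  simp only [Complex.sq_norm, normSq_apply, add_re, add_im, sub_re, sub_im, one_re, one_im]
  nlinarith

theorem norm_add_one_div_sub_one_le_one {w : ℂ} (hw : w.re ≤ 0) :
    ‖(w + 1) / (w - 1)‖ ≤ 1 := by
  rw [norm_div, div_le_one (norm_pos_iff.mpr (sub_one_ne_zero_of_re_nonpos hw))]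
  exact norm_add_one_le_norm_sub_one_of_re_nonpos hw

theorem add_one_div_sub_one_ne_one (w : ℂ) : (w + 1) / (w - 1) ≠ 1 := by
  rcases eq_or_ne (w - 1) 0 with hw | hw
  · simp [hw]
  · rw [Ne, div_eq_one_iff_eq hw]
    intro h
    have : (2 : ℂ) = 0 := by linear_combination h
    norm_num at this

theorem add_one_div_sub_one_involutive {w : ℂ} (hw : w - 1 ≠ 0) :
    ((w + 1) / (w - 1) + 1) / ((w + 1) / (w - 1) - 1) = w := by
  field_simp
  ring

end Complex

theorem DifferentiableOn.add_one_div_sub_one {f : ℂ → ℂ} {s : Set ℂ}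
    (hf : DifferentiableOn ℂ f s) (hne : ∀ z ∈ s, f z ≠ 1) :
    DifferentiableOn ℂ (fun z => (f z + 1) / (f z - 1)) s :=
  (hf.add_const 1).div (hf.sub_const 1) fun z hz => sub_ne_zero.mpr (hne z hz)

theorem stmt_17_general (ψ₁ h₁ ψ₂ : ℂ → ℂ)
    (hdiff : DifferentiableOn ℂ ψ₁ (ball (0 : ℂ) 1))
    (hne : ∀ z ∈ ball (0 : ℂ) 1, ψ₁ z ≠ 1)
    (hineq : ∀ z ∈ ball (0 : ℂ) 1,
      ((z + 1) / (z - 1)).re ≤ ((ψ₁ z + 1) / (ψ₁ z - 1)).re)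
    (hh₁ : ∀ z, h₁ z = (z + 1) / (z - 1) - (ψ₁ z + 1) / (ψ₁ z - 1))
    (hψ₂ : ∀ z, ψ₂ z = (h₁ z + 1) / (h₁ z - 1)) :
    DifferentiableOn ℂ ψ₂ (ball (0 : ℂ) 1) ∧
    (∀ z ∈ ball (0 : ℂ) 1, ‖ψ₂ z‖ ≤ 1) ∧
    (∀ z ∈ ball (0 : ℂ) 1, ψ₂ z ≠ 1) ∧
    ∀ z ∈ ball (0 : ℂ) 1,
      (ψ₁ z + 1) / (ψ₁ z - 1) + (ψ₂ z + 1) / (ψ₂ z - 1) = (z + 1) / (z - 1) := by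
  have hre : ∀ z ∈ ball (0 : ℂ) 1, (h₁ z).re ≤ 0 := fun z hz => by
    rw [hh₁, sub_re, sub_nonpos]
    exact hineq z hz
  have hball_ne_one : ∀ z ∈ ball (0 : ℂ) 1, z ≠ 1 := fun z hz h => by simp [h] at hz
  have hh₁diff : DifferentiableOn ℂ h₁ (ball (0 : ℂ) 1) :=
    ((differentiableOn_id.add_one_div_sub_one hball_ne_one).sub
      (hdiff.add_one_div_sub_one hne)).congr fun z _ => hh₁ z
  refine ⟨?_, fun z hz => ?_, fun z _ => ?_, fun z hz => ?_⟩
  · exact (hh₁diff.add_one_div_sub_one fun z hz h =>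
      (sub_one_ne_zero_of_re_nonpos (hre z hz)) (sub_eq_zero.mpr h)).congr fun z _ => hψ₂ z
  · exact hψ₂ z ▸ norm_add_one_div_sub_one_le_one (hre z hz)
  · exact hψ₂ z ▸ add_one_div_sub_one_ne_one (h₁ z)
  · rw [hψ₂, add_one_div_sub_one_involutive (sub_one_ne_zero_of_re_nonpos (hre z hz)), hh₁]
    ring

/-- Given `ψ₁` in the class with `Re((ψ₁+1)/(ψ₁-1)) ≥ Re((z+1)/(z-1))`, the function
`ψ₂ = (h₁+1)/(h₁-1)` with `h₁ = (z+1)/(z-1) - (ψ₁+1)/(ψ₁-1)` is its factorizing partner. -/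
theorem stmt_17 (ψ₁ h₁ ψ₂ : ℂ → ℂ)
    (hdiff : DifferentiableOn ℂ ψ₁ (ball (0 : ℂ) 1))
    (hcontr : ∀ z ∈ ball (0 : ℂ) 1, ‖ψ₁ z‖ ≤ 1)
    (hne : ∀ z ∈ ball (0 : ℂ) 1, ψ₁ z ≠ 1)
    (hineq : ∀ z ∈ ball (0 : ℂ) 1,
      ((z + 1) / (z - 1)).re ≤ ((ψ₁ z + 1) / (ψ₁ z - 1)).re)
    (hh₁ : ∀ z, h₁ z = (z + 1) / (z - 1) - (ψ₁ z + 1) / (ψ₁ z - 1))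
    (hψ₂ : ∀ z, ψ₂ z = (h₁ z + 1) / (h₁ z - 1)) :
    DifferentiableOn ℂ ψ₂ (ball (0 : ℂ) 1) ∧
    (∀ z ∈ ball (0 : ℂ) 1, ‖ψ₂ z‖ ≤ 1) ∧
    (∀ z ∈ ball (0 : ℂ) 1, ψ₂ z ≠ 1) ∧
    ∀ z ∈ ball (0 : ℂ) 1,
      (ψ₁ z + 1) / (ψ₁ z - 1) + (ψ₂ z + 1) / (ψ₂ z - 1) = (z + 1) / (z - 1) :=
  stmt_17_general ψ₁ h₁ ψ₂ hdiff hne hineq hh₁ hψ₂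
end
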